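/- Let R be a commutative ring, S a multiplicative subset of R, and f : M → N a u-S-isomorphism of R-modules. Then M is u-S-Noetherian if and only if N is u-S-Noetherian. -/
import Mathlib


/-- An `R`-module `M` is uniformly `S`-Noetherian if there exists `s ∈ S` such that
every submodule `N` of `M` contains a finitely generated submodule `F` with `s • N ⊆ F`. -/
def IsUSNoetherianModule (R : Type*) [CommRing R] (S : Submonoid R)
    (M : Type*) [AddCommGroup M] [Module R M] : Prop :=
  ∃ s ∈ S, ∀ N : Submodule R M, ∃ F : Submodule R M,
    F.FG ∧ F ≤ N ∧ ∀ x ∈ N, s • x ∈ F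

/-- A commutative ring `R` is uniformly `S`-Noetherian if there exists `s ∈ S` such that
every ideal `I` of `R` contains a finitely generated ideal `K` with `s • I ⊆ K`. -/
def IsUSNoetherianRing (R : Type*) [CommRing R] (S : Submonoid R) : Prop :=
  ∃ s ∈ S, ∀ I : Ideal R, ∃ K : Ideal R,
    K.FG ∧ K ≤ I ∧ ∀ x ∈ I, s * x ∈ K

/-- An `R`-homomorphism `f : M → N` is a `u`-`S`-isomorphism if there exists `s ∈ S` with
`s • ker f = 0` and `s • N ⊆ im f`. -/
def IsUSIsomorphism {R : Type*} [CommRing R] (S : Submonoid R)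
    {M N : Type*} [AddCommGroup M] [AddCommGroup N] [Module R M] [Module R N]
    (f : M →ₗ[R] N) : Prop :=
  ∃ s ∈ S, (∀ x ∈ LinearMap.ker f, s • x = 0) ∧ (∀ y : N, s • y ∈ LinearMap.range f)

/-- If `f : M → N` is a `u`-`S`-isomorphism, then `M` is `u`-`S`-Noetherian iff `N` is. -/
theorem isUSNoetherianModule_iff_of_isUSIsomorphism
    (R : Type*) [CommRing R] (S : Submonoid R)
    {M N : Type*} [AddCommGroup M] [AddCommGroup N] [Module R M] [Module R N]
    (f : M →ₗ[R] N) (h : IsUSIsomorphism S f) :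
    IsUSNoetherianModule R S M ↔ IsUSNoetherianModule R S N := by
  obtain ⟨s, hsS, hker, hsur⟩ := h
  constructor
  · rintro ⟨t, htS, hM⟩
    refine ⟨s * t, mul_mem hsS htS, fun P => ?_⟩
    obtain ⟨F, hFfg, hFle, hF⟩ := hM (P.comap f)
    refine ⟨F.map f, hFfg.map f, Submodule.map_le_iff_le_comap.mpr hFle, fun y hy => ?_⟩
    obtain ⟨x, hx⟩ := hsur y
    have hxP : x ∈ P.comap f := by
      rw [Submodule.mem_comap, hx]; exact P.smul_mem s hy
    exact ⟨t • x, hF x hxP, by rw [map_smul, hx, smul_smul, mul_comm]⟩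
  · rintro ⟨t, htS, hN⟩
    refine ⟨s * t, mul_mem hsS htS, fun P => ?_⟩
    obtain ⟨G, hGfg, hGle, hG⟩ := hN (P.map f)
    obtain ⟨T, hT⟩ := hGfg
    choose g hgP hgf using fun (y : N) (hy : y ∈ (T : Set N)) =>
      Submodule.mem_map.mp (hGle (hT ▸ Submodule.subset_span hy))
    refine ⟨Submodule.span R (Set.range fun y : (T : Set N) => g y y.2),
      Submodule.fg_span (Set.finite_range _), Submodule.span_le.mpr ?_, fun x hx => ?_⟩
    · rintro _ ⟨y, rfl⟩; exact hgP y y.2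
    · have h1 : t • f x ∈ G := hG (f x) (Submodule.mem_map_of_mem hx)
      have h2 : G ≤ Submodule.map f (Submodule.span R
          (Set.range fun y : (T : Set N) => g y y.2)) := by
        rw [← hT, Submodule.span_le]
        intro y hy
        exact ⟨g y hy, Submodule.subset_span ⟨⟨y, hy⟩, rfl⟩, hgf y hy⟩
      obtain ⟨z, hzF, hz⟩ := h2 h1
      have hk : t • x - z ∈ LinearMap.ker f := by
        rw [LinearMap.mem_ker, map_sub, map_smul, hz, sub_self]
      have h0 := hker _ hk
      rw [smul_sub, sub_eq_zero] at h0
      rw [mul_smul, h0]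
      exact Submodule.smul_mem _ s hzF
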